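/- arXiv:1911.09237 — 3 statements merged into one kernel-verified Lean document; each statement's English description precedes it below -/
import Mathlib

section
/- Let M and N be topological spaces with N connected and Hausdorff, and let F be a locally connected topological space with exactly m connected components, where m is a positive integer. Let f : M → N be a continuous surjection which is a locally trivial fiber bundle with fiber F (every point of N has an open neighborhood U together with a homeomorphism φ : f⁻¹(U) → U × F such that the composition of φ with the projection U × F → U agrees with f on f⁻¹(U)). Then there exist a topological space N', a continuous surjection g : M → N' all of whose fibers g⁻¹(x') are connected, and a covering map p : N' → N each of whose fibers has exactly m elements, such that f = p ∘ g. -/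
/-- `f : M → N` is a locally trivial fiber bundle with fiber `F`: every point of `N` has an
open neighborhood `U` together with a homeomorphism `φ : f⁻¹(U) ≃ₜ U × F` such that the
composition of `φ` with the projection `U × F → U` agrees with `f` on `f⁻¹(U)`. -/
def IsLocTrivialBundle (F : Type*) [TopologicalSpace F] {M N : Type*}
    [TopologicalSpace M] [TopologicalSpace N] (f : M → N) : Prop :=
  ∀ y : N, ∃ U : Set N, IsOpen U ∧ y ∈ U ∧
    ∃ φ : (f ⁻¹' U) ≃ₜ U × F, ∀ x : f ⁻¹' U, ((φ x).1 : N) = f (x : M)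

universe u v w

/-!
Let `N'` be the set of connected components of the fibers of `f`, with the quotient topology
from `M`; `g` is the quotient map and `p` sends a component to the point below it. Over a
trivializing open set `U`, the quotient map `f⁻¹(U) → p⁻¹(U)` and the map
`f⁻¹(U) ≅ U × F → U × π₀(F)` are both quotient maps with the same fibers, since `φ` carries
each fiber onto `F`. Hence `p⁻¹(U) ≅ U × π₀(F)` over `U`, and `π₀(F)` is discrete because `F`
is locally connected, so `p` is a covering map with fibers `π₀(F)`.
-/

open Topology

section

variable {X Y Z : Type*} [TopologicalSpace X] [TopologicalSpace Y] [TopologicalSpace Z]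

theorem Topology.IsQuotientMap.exists_homeomorph_comp_eq {q : X → Y} {h : X → Z}
    (hq : IsQuotientMap q) (hh : IsQuotientMap h) (hqh : ∀ a b, q a = q b ↔ h a = h b) :
    ∃ e : Y ≃ₜ Z, ∀ a, e (q a) = h a := by
  let eq := hq.homeomorph (f := ⟨q, hq.continuous⟩)
  let eh := hh.homeomorph (f := ⟨h, hh.continuous⟩)
  refine ⟨eq.symm.trans ((Homeomorph.Quotient.congrRight hqh).trans eh), fun a => ?_⟩
  have hqa : eq.symm (q a) = Quotient.mk _ a := eq.symm_apply_eq.mpr rfl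
  rw [Homeomorph.trans_apply, hqa]
  rfl

theorem Homeomorph.connectedComponentsMk_apply_eq_iff (e : X ≃ₜ Y) {a b : X} :
    ConnectedComponents.mk (e a) = .mk (e b) ↔ ConnectedComponents.mk a = .mk b :=
  ⟨fun hab => by simpa using congrArg e.symm.continuous.connectedComponentsMap hab,
    fun hab => by simpa using congrArg e.continuous.connectedComponentsMap hab⟩

theorem ConnectedComponents.isOpenQuotientMap_mk (X : Type*) [TopologicalSpace X]
    [LocallyConnectedSpace X] : IsOpenQuotientMap (ConnectedComponents.mk : X → _) :=
  ⟨surjective_coe, continuous_coe, fun _ _ => isOpen_discrete _⟩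

end

section FiberComponents

variable {M N : Type*} [TopologicalSpace M] (f : M → N)

def fiberComponent (x : M) : Set M :=
  connectedComponentIn (f ⁻¹' {f x}) x

variable {f}

theorem mem_fiberComponent_self (x : M) : x ∈ fiberComponent f x :=
  mem_connectedComponentIn rfl

theorem apply_eq_of_mem_fiberComponent {x z : M} (hz : z ∈ fiberComponent f x) : f z = f x :=
  (connectedComponentIn_subset _ _ hz : z ∈ f ⁻¹' {f x})

theorem fiberComponent_eq_iff_mem {x z : M} :
    fiberComponent f z = fiberComponent f x ↔ z ∈ fiberComponent f x := by
  refine ⟨fun h => h ▸ mem_fiberComponent_self z, fun hz => ?_⟩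
  rw [fiberComponent, fiberComponent, apply_eq_of_mem_fiberComponent hz]
  exact (connectedComponentIn_eq hz).symm

theorem apply_eq_of_fiberComponent_eq {x y : M} (h : fiberComponent f x = fiberComponent f y) :
    f x = f y :=
  apply_eq_of_mem_fiberComponent (fiberComponent_eq_iff_mem.mp h)

theorem fiberComponent_eq_iff_mk_eq {v : N} {x y : M} (hx : f x = v) (hy : f y = v) :
    fiberComponent f x = fiberComponent f y ↔
      ConnectedComponents.mk (⟨x, hx⟩ : f ⁻¹' {v}) = .mk ⟨y, hy⟩ := by
  subst hx
  rw [fiberComponent, fiberComponent, hy,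
    connectedComponentIn_eq_image (show x ∈ f ⁻¹' {f x} from rfl),
    connectedComponentIn_eq_image (show y ∈ f ⁻¹' {f x} from hy),
    Set.image_eq_image Subtype.val_injective, ConnectedComponents.coe_eq_coe]

variable (f)

/-- Equal components force equal fibers, so the kernel of `fiberComponent f` identifies exactly
the points lying in the same connected component of the same fiber. -/
abbrev FiberComponents : Type _ := Quotient (Setoid.ker (fiberComponent f))

namespace FiberComponents

def mk : M → FiberComponents f := Quotient.mk _

def proj : FiberComponents f → N :=
  Quotient.lift f fun _ _ => apply_eq_of_fiberComponent_eq

variable {f}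

theorem mk_eq_mk {x y : M} : mk f x = mk f y ↔ fiberComponent f x = fiberComponent f y :=
  Quotient.eq

theorem isQuotientMap_mk : IsQuotientMap (mk f) := isQuotientMap_quotient_mk'

theorem surjective_mk : Function.Surjective (mk f) := Quotient.mk_surjective

theorem preimage_mk_singleton (x : M) : mk f ⁻¹' {mk f x} = fiberComponent f x := by
  ext z
  simp only [Set.mem_preimage, Set.mem_singleton_iff, mk_eq_mk, fiberComponent_eq_iff_mem]

theorem isConnected_preimage_mk_singleton (x : FiberComponents f) :
    IsConnected (mk f ⁻¹' {x}) := by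
  obtain ⟨x, rfl⟩ := surjective_mk x
  rw [preimage_mk_singleton]
  exact ⟨⟨x, mem_fiberComponent_self x⟩, isPreconnected_connectedComponentIn⟩

end FiberComponents

end FiberComponents

section Trivialization

variable {M N F : Type*} [TopologicalSpace M] [TopologicalSpace N] [TopologicalSpace F]
  {f : M → N} {U : Set N} (φ : f ⁻¹' U ≃ₜ U × F)

def trivializationFiberHomeomorph (hφ : ∀ x : f ⁻¹' U, ((φ x).1 : N) = f x) {v : N}
    (hv : v ∈ U) : f ⁻¹' {v} ≃ₜ F where
  toFun z := (φ ⟨z, Set.mem_of_eq_of_mem (x := f z) z.2 hv⟩).2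
  invFun t := ⟨φ.symm (⟨v, hv⟩, t), by simp [← hφ]⟩
  left_inv z := by
    have hzU : (z : M) ∈ f ⁻¹' U := Set.mem_of_eq_of_mem (x := f z) z.2 hv
    have hφz : ((⟨v, hv⟩, (φ ⟨z, hzU⟩).2) : U × F) = φ ⟨z, hzU⟩ :=
      Prod.ext (Subtype.ext ((hφ _).trans (show f z = v from z.2)).symm) rfl
    ext
    change ((φ.symm (⟨v, hv⟩, (φ ⟨z, hzU⟩).2) : f ⁻¹' U) : M) = z
    rw [hφz, φ.symm_apply_apply]
  right_inv t := by simp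
  continuous_toFun := by fun_prop
  continuous_invFun := by fun_prop

theorem fiberComponent_eq_iff_of_trivialization
    (hφ : ∀ x : f ⁻¹' U, ((φ x).1 : N) = f x) {x y : f ⁻¹' U} (hxy : f x = f y) :
    fiberComponent f x = fiberComponent f y ↔
      ConnectedComponents.mk (φ x).2 = .mk (φ y).2 := by
  rw [fiberComponent_eq_iff_mk_eq rfl hxy.symm,
    ← (trivializationFiberHomeomorph φ hφ x.2).connectedComponentsMk_apply_eq_iff]
  rfl

theorem FiberComponents.mk_eq_mk_iff_of_trivialization
    (hφ : ∀ x : f ⁻¹' U, ((φ x).1 : N) = f x) (x y : f ⁻¹' U) :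
    FiberComponents.mk f x = FiberComponents.mk f y ↔
      Prod.map id ConnectedComponents.mk (φ x) = Prod.map id ConnectedComponents.mk (φ y) := by
  simp only [FiberComponents.mk_eq_mk, Prod.ext_iff, Prod.map_fst, Prod.map_snd, id_eq,
    Subtype.ext_iff, hφ]
  exact ⟨fun h => ⟨apply_eq_of_fiberComponent_eq h,
    (fiberComponent_eq_iff_of_trivialization φ hφ (apply_eq_of_fiberComponent_eq h)).mp h⟩,
    fun ⟨hxy, h⟩ => (fiberComponent_eq_iff_of_trivialization φ hφ hxy).mpr h⟩

theorem FiberComponents.isEvenlyCovered_proj_of_trivialization [LocallyConnectedSpace F]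
    (hφ : ∀ x : f ⁻¹' U, ((φ x).1 : N) = f x) (hf : Continuous f) (hU : IsOpen U) {y : N}
    (hy : y ∈ U) : IsEvenlyCovered (proj f) y (ConnectedComponents F) := by
  have hpU : IsOpen (proj f ⁻¹' U) := isQuotientMap_mk.isOpen_preimage.mp (hU.preimage hf)
  have hq := isQuotientMap_mk.restrictPreimage_isOpen hpU
  have hΦ : IsQuotientMap (Prod.map id ConnectedComponents.mk ∘ φ) :=
    ((IsOpenQuotientMap.id.prodMap (ConnectedComponents.isOpenQuotientMap_mk F)).comp
      φ.isOpenQuotientMap).isQuotientMap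
  obtain ⟨e, he⟩ := hq.exists_homeomorph_comp_eq hΦ fun x y =>
    Subtype.ext_iff.trans (mk_eq_mk_iff_of_trivialization φ hφ x y)
  refine ⟨inferInstance, U, hy, hU, hpU, e, fun z => ?_⟩
  obtain ⟨x, rfl⟩ := hq.surjective z
  rw [he]
  exact hφ x

end Trivialization

theorem IsLocTrivialBundle.isEvenlyCovered_fiberComponentsProj {M N F : Type*}
    [TopologicalSpace M] [TopologicalSpace N] [TopologicalSpace F] [LocallyConnectedSpace F]
    {f : M → N} (hbundle : IsLocTrivialBundle F f) (hf : Continuous f) (y : N) :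
    IsEvenlyCovered (FiberComponents.proj f) y (ConnectedComponents F) :=
  let ⟨_, hU, hy, φ, hφ⟩ := hbundle y
  FiberComponents.isEvenlyCovered_proj_of_trivialization φ hφ hf hU hy

theorem stein_factorization_general {M : Type u} {N : Type v} {F : Type w}
    [TopologicalSpace M] [TopologicalSpace N] [TopologicalSpace F]
    [LocallyConnectedSpace F]
    (m : ℕ) (hF : Nat.card (ConnectedComponents F) = m)
    (f : M → N) (hf : Continuous f)
    (hbundle : IsLocTrivialBundle F f) :
    ∃ (N' : Type u) (_ : TopologicalSpace N') (g : M → N') (p : N' → N),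
      Continuous g ∧ Function.Surjective g ∧
      (∀ x' : N', IsConnected (g ⁻¹' {x'})) ∧
      IsCoveringMap p ∧ (∀ y : N, Nat.card (p ⁻¹' {y}) = m) ∧
      f = p ∘ g := by
  have hcover := hbundle.isEvenlyCovered_fiberComponentsProj hf
  refine ⟨FiberComponents f, inferInstance, FiberComponents.mk f, FiberComponents.proj f,
    FiberComponents.isQuotientMap_mk.continuous, FiberComponents.surjective_mk,
    FiberComponents.isConnected_preimage_mk_singleton,
    fun y => (hcover y).to_isEvenlyCovered_preimage, fun y => ?_, rfl⟩
  rw [← hF]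
  exact Nat.card_congr (hcover y).fiberHomeomorph.toEquiv.symm

/-- Topological Stein factorization: a fiber bundle over a connected Hausdorff base whose
locally connected fiber has exactly `m` connected components factors as a map with connected
fibers followed by an `m`-sheeted covering map. -/
theorem stein_factorization {M : Type u} {N : Type v} {F : Type w}
    [TopologicalSpace M] [TopologicalSpace N] [TopologicalSpace F]
    [ConnectedSpace N] [T2Space N] [LocallyConnectedSpace F]
    (m : ℕ) (hm : 0 < m) (hF : Nat.card (ConnectedComponents F) = m)
    (f : M → N) (hf : Continuous f) (hsurj : Function.Surjective f)
    (hbundle : IsLocTrivialBundle F f) :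
    ∃ (N' : Type u) (_ : TopologicalSpace N') (g : M → N') (p : N' → N),
      Continuous g ∧ Function.Surjective g ∧
      (∀ x' : N', IsConnected (g ⁻¹' {x'})) ∧
      IsCoveringMap p ∧ (∀ y : N, Nat.card (p ⁻¹' {y}) = m) ∧
      f = p ∘ g :=
  stein_factorization_general m hF f hf hbundle
end

section
/- Let M and N be topological spaces with N Hausdorff, and let F be a locally connected topological space with finitely many connected components. Let f : M → N be a continuous surjection which is a locally trivial fiber bundle with fiber F. Define an equivalence relation ∼ on M by: x ∼ y if and only if f(x) = f(y) and x and y lie in the same connected component of the fiber f⁻¹(f(x)). Then the quotient space M/∼, equipped with the quotient topology, is a Hausdorff topological space. -/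
open Set

/-- The quotient of the total space of a fiber bundle over a Hausdorff base, with locally
connected fiber having finitely many connected components, by the relation "lie in the same
connected component of the same fiber", is Hausdorff (with the quotient topology). -/
theorem stein_quotient_hausdorff {M N F : Type*}
    [TopologicalSpace M] [TopologicalSpace N] [TopologicalSpace F]
    [T2Space N] [LocallyConnectedSpace F] [Finite (ConnectedComponents F)]
    (f : M → N) (hf : Continuous f) (hsurj : Function.Surjective f)
    (hbundle : IsLocTrivialBundle F f)
    (r : M → M → Prop)
    (hr : ∀ x y : M, r x y ↔ f x = f y ∧ y ∈ connectedComponentIn (f ⁻¹' {f x}) x) :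
    T2Space (Quot r) := by
  -- r is an equivalence relation
  have hrefl : ∀ x, r x x := fun x =>
    (hr x x).2 ⟨rfl, mem_connectedComponentIn rfl⟩
  have hsymm : ∀ {x y}, r x y → r y x := by
    intro x y h
    obtain ⟨h1, h2⟩ := (hr x y).1 h
    refine (hr y x).2 ⟨h1.symm, ?_⟩
    have := connectedComponentIn_eq h2
    rw [h1] at this
    rw [← this]
    rw [← h1]
    exact mem_connectedComponentIn rfl
  have htrans : ∀ {x y z}, r x y → r y z → r x z := by
    intro x y z hxy hyz
    obtain ⟨h1, h2⟩ := (hr x y).1 hxy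
    obtain ⟨h3, h4⟩ := (hr y z).1 hyz
    refine (hr x z).2 ⟨h1.trans h3, ?_⟩
    have := connectedComponentIn_eq h2
    rw [this, h1]
    exact h4
  have hequiv : Equivalence r := ⟨hrefl, hsymm, htrans⟩
  have hmkeq : ∀ x y : M, Quot.mk r x = Quot.mk r y ↔ r x y := fun x y => by
    rw [Quot.eq, hequiv.eqvGen_iff]
  -- suffices to find disjoint open saturated sets
  have key : ∀ x y : M, ¬ r x y → ∃ A B : Set M, IsOpen A ∧ IsOpen B ∧
      x ∈ A ∧ y ∈ B ∧ Disjoint A B ∧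
      (∀ a b, r a b → a ∈ A → b ∈ A) ∧ (∀ a b, r a b → a ∈ B → b ∈ B) := by
    intro x y hxy
    by_cases hfe : f x = f y
    · -- same fiber, different components: use the trivialization
      obtain ⟨U, hUopen, hfxU, φ, hφ⟩ := hbundle (f x)
      have hx : x ∈ f ⁻¹' U := hfxU
      have hy : y ∈ f ⁻¹' U := by simp only [mem_preimage, ← hfe]; exact hfxU
      set g : (f ⁻¹' U) → F := fun z => (φ z).2 with hg
      have hgc : Continuous g := continuous_snd.comp φ.continuous
      -- forward: same fiber-component implies same F-component
      have fwd : ∀ (z w : M) (hz : z ∈ f ⁻¹' U) (hw : w ∈ f ⁻¹' U),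
          w ∈ connectedComponentIn (f ⁻¹' {f z}) z →
          connectedComponent (g ⟨w, hw⟩) = connectedComponent (g ⟨z, hz⟩) := by
        intro z w hz hw hwz
        set C : Set M := connectedComponentIn (f ⁻¹' {f z}) z with hC
        have hCsub : C ⊆ f ⁻¹' U := by
          refine (connectedComponentIn_subset _ _).trans ?_
          intro m hm
          simp only [mem_preimage, mem_singleton_iff] at hm
          simp only [mem_preimage, hm]
          exact hz
        have hCpre' : IsPreconnected C := isPreconnected_connectedComponentIn
        have hCpre : IsPreconnected ((Subtype.val : (f ⁻¹' U) → M) ⁻¹' C) := by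
          refine Topology.IsInducing.subtypeVal.isPreconnected_image.mp ?_
          rwa [Subtype.image_preimage_coe, inter_eq_right.mpr hCsub]
        have himg : IsPreconnected (g '' (Subtype.val ⁻¹' C)) :=
          hCpre.image _ hgc.continuousOn
        have hzC : (⟨z, hz⟩ : f ⁻¹' U) ∈ Subtype.val ⁻¹' C :=
          mem_connectedComponentIn rfl
        have hwC : (⟨w, hw⟩ : f ⁻¹' U) ∈ Subtype.val ⁻¹' C := hwz
        have h1 : g ⟨w, hw⟩ ∈ connectedComponent (g ⟨z, hz⟩) :=
          himg.subset_connectedComponent (mem_image_of_mem _ hzC)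
            (mem_image_of_mem _ hwC)
        exact (connectedComponent_eq h1).symm
      -- backward: same F-component implies same fiber-component
      have bwd : connectedComponent (g ⟨x, hx⟩) = connectedComponent (g ⟨y, hy⟩) →
          r x y := by
        intro hcc
        have hPpre : IsPreconnected (({(⟨f x, hfxU⟩ : U)} : Set U) ×ˢ
            connectedComponent (g ⟨x, hx⟩)) :=
          isPreconnected_singleton.prod isPreconnected_connectedComponent
        set T0 : Set (f ⁻¹' U) := φ ⁻¹' (({(⟨f x, hfxU⟩ : U)} : Set U) ×ˢ
            connectedComponent (g ⟨x, hx⟩)) with hT0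
        have hT0eq : T0 = φ.symm '' (({(⟨f x, hfxU⟩ : U)} : Set U) ×ˢ
            connectedComponent (g ⟨x, hx⟩)) := by
          rw [Homeomorph.image_symm]
        have hT0pre : IsPreconnected T0 := by
          rw [hT0eq]
          exact hPpre.image _ φ.symm.continuous.continuousOn
        have hTpre : IsPreconnected (Subtype.val '' T0) :=
          hT0pre.image _ continuous_subtype_val.continuousOn
        have hxT : x ∈ Subtype.val '' T0 := by
          refine ⟨⟨x, hx⟩, ?_, rfl⟩
          refine ⟨?_, mem_connectedComponent⟩
          exact Subtype.ext (hφ ⟨x, hx⟩)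
        have hyT : y ∈ Subtype.val '' T0 := by
          refine ⟨⟨y, hy⟩, ?_, rfl⟩
          constructor
          · exact Subtype.ext ((hφ ⟨y, hy⟩).trans hfe.symm)
          · rw [hcc]; exact mem_connectedComponent
        have hTsub : Subtype.val '' T0 ⊆ f ⁻¹' {f x} := by
          rintro _ ⟨m, hm, rfl⟩
          have : (φ m).1 = (⟨f x, hfxU⟩ : U) := hm.1
          have h2 : f (m : M) = f x := by
            rw [← hφ m, this]
          simpa [mem_preimage] using h2
        refine (hr x y).2 ⟨hfe, ?_⟩
        exact hTpre.subset_connectedComponentIn hxT hTsub hyT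
      have hne : connectedComponent (g ⟨x, hx⟩) ≠ connectedComponent (g ⟨y, hy⟩) :=
        fun h => hxy (bwd h)
      -- the saturated open sets
      refine ⟨Subtype.val '' (g ⁻¹' connectedComponent (g ⟨x, hx⟩)),
        Subtype.val '' (g ⁻¹' connectedComponent (g ⟨y, hy⟩)), ?_, ?_, ?_, ?_, ?_, ?_, ?_⟩
      · exact (hUopen.preimage hf).isOpenMap_subtype_val _
          (isOpen_connectedComponent.preimage hgc)
      · exact (hUopen.preimage hf).isOpenMap_subtype_val _
          (isOpen_connectedComponent.preimage hgc)
      · exact ⟨⟨x, hx⟩, mem_connectedComponent, rfl⟩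
      · exact ⟨⟨y, hy⟩, mem_connectedComponent, rfl⟩
      · rw [Set.disjoint_left]
        rintro z ⟨m, hm, rfl⟩ ⟨m', hm', hmm⟩
        have hmeq : m' = m := Subtype.ext hmm
        rw [hmeq] at hm'
        simp only [mem_preimage] at hm hm'
        exact hne ((connectedComponent_eq hm).trans (connectedComponent_eq hm').symm)
      · rintro a b hab ⟨m, hm, rfl⟩
        obtain ⟨h1, h2⟩ := (hr (m : M) b).1 hab
        have hb : b ∈ f ⁻¹' U := by
          simp only [mem_preimage, ← h1]; exact m.2
        refine ⟨⟨b, hb⟩, ?_, rfl⟩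
        have h3 := fwd (m : M) b m.2 hb h2
        simp only [mem_preimage] at hm ⊢
        exact connectedComponent_eq_iff_mem.mp
          (h3.trans (connectedComponent_eq hm).symm)
      · rintro a b hab ⟨m, hm, rfl⟩
        obtain ⟨h1, h2⟩ := (hr (m : M) b).1 hab
        have hb : b ∈ f ⁻¹' U := by
          simp only [mem_preimage, ← h1]; exact m.2
        refine ⟨⟨b, hb⟩, ?_, rfl⟩
        have h3 := fwd (m : M) b m.2 hb h2
        simp only [mem_preimage] at hm ⊢
        exact connectedComponent_eq_iff_mem.mp
          (h3.trans (connectedComponent_eq hm).symm)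
    · -- different fibers: use T2 of N
      obtain ⟨V, W, hV, hW, hfV, hfW, hVW⟩ := t2_separation hfe
      refine ⟨f ⁻¹' V, f ⁻¹' W, hV.preimage hf, hW.preimage hf, hfV, hfW,
        hVW.preimage f, ?_, ?_⟩
      · intro a b hab ha
        have := ((hr a b).1 hab).1
        simpa [mem_preimage, ← this] using ha
      · intro a b hab ha
        have := ((hr a b).1 hab).1
        simpa [mem_preimage, ← this] using ha
  -- conclude T2 of the quotient
  constructor
  intro a b hab
  induction a using Quot.ind with | _ x =>
  induction b using Quot.ind with | _ y =>
  have hxy : ¬ r x y := fun h => hab ((hmkeq x y).2 h)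
  obtain ⟨A, B, hA, hB, hxA, hyB, hAB, hsatA, hsatB⟩ := key x y hxy
  refine ⟨Quot.mk r '' A, Quot.mk r '' B, ?_, ?_, ⟨x, hxA, rfl⟩, ⟨y, hyB, rfl⟩, ?_⟩
  · rw [isOpen_coinduced (f := Quot.mk r)]
    have : Quot.mk r ⁻¹' (Quot.mk r '' A) = A := by
      ext z
      constructor
      · rintro ⟨a, ha, hz⟩
        exact hsatA a z ((hmkeq a z).1 hz) ha
      · exact fun hz => ⟨z, hz, rfl⟩
    rwa [this]
  · rw [isOpen_coinduced (f := Quot.mk r)]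
    have : Quot.mk r ⁻¹' (Quot.mk r '' B) = B := by
      ext z
      constructor
      · rintro ⟨a, ha, hz⟩
        exact hsatB a z ((hmkeq a z).1 hz) ha
      · exact fun hz => ⟨z, hz, rfl⟩
    rwa [this]
  · rw [Set.disjoint_left]
    rintro q ⟨a, ha, rfl⟩ ⟨b, hb, hq⟩
    have : r b a := (hmkeq b a).1 hq
    exact (Set.disjoint_left.1 hAB ha) (hsatB b a this hb)
end

section
/- Let p : E → X be a covering map, where E is a nonempty path-connected, simply connected topological space and X is path-connected and locally path-connected. Let Y ⊆ X be a path-connected subset with y₀ ∈ Y. If the preimage p⁻¹(Y) is path-connected, then every loop in X based at y₀ is homotopic relative to its endpoints, within X, to a loop whose image is contained in Y. -/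
open Set

namespace IsCoveringMap

variable {E X : Type*} [TopologicalSpace E] [TopologicalSpace X] {p : E → X}

theorem exists_path_lift (hp : IsCoveringMap p) {e : E} {y : X} (γ : Path (p e) y) :
    ∃ (e' : E) (Γ : Path e e') (he' : p e' = y), (Γ.map hp.continuous).cast rfl he'.symm = γ := by
  obtain ⟨Γ, hΓ, hΓ0⟩ := hp.exists_path_lifts γ.toContinuousMap e (by simp)
  have hΓ1 : p (Γ 1) = y := by simpa using congr_fun hΓ 1
  exact ⟨Γ 1, ⟨Γ, hΓ0, rfl⟩, hΓ1, Path.ext hΓ⟩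

theorem surjective [Nonempty E] [PathConnectedSpace X] (hp : IsCoveringMap p) :
    Function.Surjective p := by
  intro x
  obtain ⟨e⟩ := ‹Nonempty E›
  obtain ⟨e', -, he', -⟩ := hp.exists_path_lift (PathConnectedSpace.somePath (p e) x)
  exact ⟨e', he'⟩

/-- A path `γ` in `X` lifts to a path `Γ` in `E`; its endpoints both lie over `Y`, so `Γ` can be
replaced by a path `δ` inside `p ⁻¹' Y`, and `Γ ≃ δ` because `E` is simply connected. -/
theorem exists_homotopic_range_subset [SimplyConnectedSpace E] (hp : IsCoveringMap p)
    {Y : Set X} (hY : IsPathConnected (p ⁻¹' Y)) {x y : X} (hx : x ∈ range p)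
    (hxY : x ∈ Y) (hyY : y ∈ Y) (γ : Path x y) :
    ∃ γ' : Path x y, γ.Homotopic γ' ∧ range γ' ⊆ Y := by
  obtain ⟨e, rfl⟩ := hx
  obtain ⟨e', Γ, rfl, rfl⟩ := hp.exists_path_lift γ
  obtain ⟨δ, hδ⟩ := hY.joinedIn e hxY e' hyY
  refine ⟨δ.map hp.continuous, ?_, ?_⟩
  · exact (SimplyConnectedSpace.paths_homotopic Γ δ).map ⟨p, hp.continuous⟩
  · rintro _ ⟨t, rfl⟩
    exact hδ t

end IsCoveringMap

theorem pi1_surjective_of_preimage_pathConnected_general {E X : Type*}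
    [TopologicalSpace E] [TopologicalSpace X]
    [SimplyConnectedSpace E]
    [PathConnectedSpace X]
    (p : E → X) (hp : IsCoveringMap p)
    {Y : Set X} {y₀ : X} (hy₀ : y₀ ∈ Y)
    (hconn : IsPathConnected (p ⁻¹' Y)) :
    ∀ γ : Path y₀ y₀, ∃ γ' : Path y₀ y₀,
      Path.Homotopic γ γ' ∧ Set.range γ' ⊆ Y :=
  hp.exists_homotopic_range_subset hconn (hp.surjective y₀) hy₀ hy₀

/-- If `p : E → X` is a covering map from a nonempty, path-connected, simply connected
space onto a path-connected, locally path-connected space, `Y ⊆ X` is path-connected with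
`y₀ ∈ Y`, and `p⁻¹(Y)` is path-connected, then every loop in `X` based at `y₀` is
homotopic (rel endpoints) to a loop with image in `Y` (i.e. `π₁(Y, y₀) → π₁(X, y₀)` is
surjective). -/
theorem pi1_surjective_of_preimage_pathConnected {E X : Type*}
    [TopologicalSpace E] [TopologicalSpace X]
    [Nonempty E] [PathConnectedSpace E] [SimplyConnectedSpace E]
    [PathConnectedSpace X] [LocallyPathConnectedSpace X]
    (p : E → X) (hp : IsCoveringMap p)
    {Y : Set X} (hY : IsPathConnected Y) {y₀ : X} (hy₀ : y₀ ∈ Y)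
    (hconn : IsPathConnected (p ⁻¹' Y)) :
    ∀ γ : Path y₀ y₀, ∃ γ' : Path y₀ y₀,
      Path.Homotopic γ γ' ∧ Set.range γ' ⊆ Y :=
  pi1_surjective_of_preimage_pathConnected_general p hp hy₀ hconn
end
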